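/- arXiv:2208.12727 — 3 statements merged into one kernel-verified Lean document; each statement's English description precedes it below -/
import Mathlib

section
/- Let k ≥ 2 be an integer and λ̲ ∈ ℝ_+^k satisfy Assumption (A). If λ̲ is fully critical-subcritical (i.e. λ^{∖i} ≤ 1 for every i∈[k]), then f*_ℓ = 1 if ℓ = 1 and f*_ℓ = 0 for every integer ℓ ≥ 2, where f*_ℓ is the probability that the root of an edge-colored Poisson branching process tree with color intensity vector λ̲ has exactly ℓ friends. -/
open MeasureTheory ProbabilityTheory Filter

namespace CAP

/-- Ulam–Harris labels for the edge-colored branching-process tree: a vertex is a list of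
(color, index-among-siblings-of-that-color) pairs, read from the vertex back to the root. -/
abbrev Vtx (k : ℕ) := List (Fin k × ℕ)

/-- Membership in the branching-process tree determined by the offspring configuration `c`,
where `c v i` is the number of children of `v` attached by an edge of color `i`. -/
def inTree {k : ℕ} (c : Vtx k → Fin k → ℕ) : Vtx k → Prop
  | [] => True
  | q :: v => inTree c v ∧ q.2 < c v q.1

/-- `v` is `i`-avoiding connected to infinity: there is an infinite path of descendants
starting at `v` using no edge of color `i`. -/
def avoidInf {k : ℕ} (c : Vtx k → Fin k → ℕ) (i : Fin k) (v : Vtx k) : Prop :=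
  ∃ f : ℕ → Vtx k, f 0 = v ∧ ∀ m : ℕ,
    inTree c (f (m + 1)) ∧ ∃ q : Fin k × ℕ, q.1 ≠ i ∧ f (m + 1) = q :: f m

/-- The root and the vertex `v` are `i`-avoiding friends: either the (unique) path from the
root to `v` uses no edge of color `i`, or both are `i`-avoiding connected to infinity. -/
def iFriend {k : ℕ} (c : Vtx k → Fin k → ℕ) (i : Fin k) (v : Vtx k) : Prop :=
  (∀ q ∈ v, Prod.fst q ≠ i) ∨ (avoidInf c i ([] : Vtx k) ∧ avoidInf c i v)

/-- The set of (color-avoiding) friends of the root in the branching-process tree. -/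
def friendSet {k : ℕ} (c : Vtx k → Fin k → ℕ) : Set (Vtx k) :=
  {v | inTree c v ∧ ∀ i : Fin k, iFriend c i v}

/-- `X v i` (the numbers of color-`i` children of `v`) form an independent family of
Poisson(`lam i`) random variables: the edge-colored Poisson branching process tree. -/
structure IsECBP {k : ℕ} {Ω : Type*} [MeasurableSpace Ω] (μ : Measure Ω)
    (lam : Fin k → ℝ) (X : Vtx k → Fin k → Ω → ℕ) : Prop where
  isProb : IsProbabilityMeasure μ
  meas : ∀ v i, Measurable (X v i)
  indep : iIndepFun
    (fun p : Vtx k × Fin k => X p.1 p.2) μ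
  poisson : ∀ v i m, μ {ω | X v i ω = m}
    = ENNReal.ofReal (Real.exp (-(lam i)) * (lam i) ^ m / m.factorial)

/-- The `i`-avoiding graph of a colored edge configuration `c` on `Fin n`:
`x` and `y` are adjacent if they are joined by an edge of some color `j ≠ i`. -/
def avoidGraph {k n : ℕ} (c : Fin k → Sym2 (Fin n) → Bool) (i : Fin k) :
    SimpleGraph (Fin n) where
  Adj x y := x ≠ y ∧ ∃ j : Fin k, j ≠ i ∧ c j s(x, y) = true
  symm := ⟨by
    rintro x y ⟨hxy, j, hj, hc⟩
    exact ⟨hxy.symm, j, hj, by rwa [Sym2.eq_swap] at hc⟩⟩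
  loopless := ⟨fun x h => h.1 rfl⟩

/-- The color-avoiding connected component of `v`. -/
def caComp {k n : ℕ} (c : Fin k → Sym2 (Fin n) → Bool) (v : Fin n) : Set (Fin n) :=
  {w | ∀ i : Fin k, (avoidGraph c i).Reachable v w}

/-- The edge-colored Erdős–Rényi multigraph `𝒢_n(V, λ)` on vertex set `Fin n`:
independent colored edge indicators, an edge of color `i` being present with probability
`1 - exp (- lam i / n)`. -/
structure IsECER {k : ℕ} {Ω : Type*} [MeasurableSpace Ω] (μ : Measure Ω) (n : ℕ)
    (lam : Fin k → ℝ) (E : Fin k → Sym2 (Fin n) → Ω → Bool) : Prop where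
  isProb : IsProbabilityMeasure μ
  meas : ∀ i e, Measurable (E i e)
  indep : iIndepFun
    (fun p : Fin k × Sym2 (Fin n) => E p.1 p.2) μ
  prob : ∀ i e, ¬ e.IsDiag →
    μ {ω | E i e ω = true} = ENNReal.ofReal (1 - Real.exp (-(lam i) / n))
  noDiag : ∀ i e, e.IsDiag → ∀ ω, E i e ω = false

/-! For every color `i`, the `i`-avoiding part of the tree below any vertex is a Galton–Watson
tree with `Poisson(λ^{∖i})` offspring: a vertex has an `i`-avoiding path of length `n + 1` below
it iff one of its non-`i` children has one of length `n`, and these events are independent across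
children. Hence the probability of such a path of length `n` is the `n`-th iterate at `1` of
`x ↦ 1 - exp (-λ^{∖i} x)`, which tends to `0` when `λ^{∖i} ≤ 1` because `1 - e^{-y} < y` for
`y > 0`. So almost surely the root is `i`-avoiding connected to infinity for no `i`, and then no
vertex `v ≠ r` is a friend: the path from `r` to `v` is not `i`-avoiding for the color `i` of
any of its edges. -/

section SurvivalMap

noncomputable def survivalMap (r x : ℝ) : ℝ := 1 - Real.exp (-(r * x))

variable {r : ℝ}

lemma survivalMap_monotone (hr : 0 ≤ r) : Monotone (survivalMap r) := fun x y hxy => by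
  unfold survivalMap
  gcongr

lemma survivalMap_le_one (x : ℝ) : survivalMap r x ≤ 1 := by
  unfold survivalMap
  linarith [Real.exp_pos (-(r * x))]

lemma survivalMap_mapsTo_Icc (hr : 0 ≤ r) :
    Set.MapsTo (survivalMap r) (Set.Icc 0 1) (Set.Icc 0 1) := fun x hx => by
  refine ⟨?_, survivalMap_le_one x⟩
  unfold survivalMap
  linarith [Real.exp_le_one_iff.2 (neg_nonpos.2 (mul_nonneg hr hx.1))]

lemma survivalMap_lt_self (hr : r ≤ 1) {x : ℝ} (hx : 0 < x) : survivalMap r x < x := by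
  unfold survivalMap
  rcases eq_or_ne (r * x) 0 with h | h
  · simpa [h] using hx
  · linarith [Real.add_one_lt_exp (neg_ne_zero.2 h), mul_le_of_le_one_left hx.le hr]

lemma tendsto_iterate_survivalMap (h0 : 0 ≤ r) (h1 : r ≤ 1) :
    Tendsto (fun n => (survivalMap r)^[n] 1) atTop (nhds 0) := by
  have hmem : ∀ n, (survivalMap r)^[n] 1 ∈ Set.Icc (0 : ℝ) 1 := fun n =>
    (survivalMap_mapsTo_Icc h0).iterate n ⟨zero_le_one, le_rfl⟩
  have hconv := tendsto_atTop_ciInf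
    ((survivalMap_monotone h0).antitone_iterate_of_map_le (survivalMap_le_one 1))
    ⟨0, by rintro _ ⟨n, rfl⟩; exact (hmem n).1⟩
  have hfix := isFixedPt_of_tendsto_iterate hconv (by unfold survivalMap; fun_prop)
  have hlim : ⨅ n, (survivalMap r)^[n] 1 = 0 := by
    refine le_antisymm (not_lt.1 fun hpos => (survivalMap_lt_self h1 hpos).ne hfix) ?_
    exact le_ciInf fun n => (hmem n).1
  rwa [hlim] at hconv

end SurvivalMap

section Paths

variable {k : ℕ}

def subtree (c : Vtx k → Fin k → ℕ) (u : Vtx k) : Vtx k → Fin k → ℕ := fun w j => c (w ++ u) j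

lemma subtree_nil (c : Vtx k → Fin k → ℕ) : subtree c [] = c := by
  funext v j
  simp [subtree]

lemma subtree_subtree (c : Vtx k → Fin k → ℕ) (u w : Vtx k) :
    subtree (subtree c u) w = subtree c (w ++ u) := by
  funext v j
  simp [subtree]

lemma inTree_append (c : Vtx k → Fin k → ℕ) (w u : Vtx k) :
    inTree c (w ++ u) ↔ inTree c u ∧ inTree (subtree c u) w := by
  induction w with
  | nil => simp [inTree]
  | cons q w ih =>
    simp only [List.cons_append, inTree, ih, subtree]
    tauto

def HasAvoidingPath (c : Vtx k → Fin k → ℕ) (i : Fin k) (n : ℕ) : Prop :=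
  ∃ v : Vtx k, v.length = n ∧ (∀ q ∈ v, q.1 ≠ i) ∧ inTree c v

lemma hasAvoidingPath_zero (c : Vtx k → Fin k → ℕ) (i : Fin k) : HasAvoidingPath c i 0 :=
  ⟨[], rfl, by simp, trivial⟩

lemma hasAvoidingPath_succ_iff {c : Vtx k → Fin k → ℕ} {i : Fin k} {n : ℕ} :
    HasAvoidingPath c i (n + 1) ↔
      ∃ j ≠ i, ∃ m < c [] j, HasAvoidingPath (subtree c [(j, m)]) i n := by
  constructor
  · rintro ⟨v, hlen, havoid, htree⟩
    obtain ⟨w, q, rfl⟩ := List.eq_nil_or_concat' v |>.resolve_left (by rintro rfl; simp at hlen)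
    simp only [List.mem_append, List.mem_singleton] at havoid
    rw [inTree_append] at htree
    exact ⟨q.1, havoid q (Or.inr rfl), q.2, by simpa [inTree] using htree.1,
      w, by simpa using hlen, fun q' hq' => havoid q' (Or.inl hq'), htree.2⟩
  · rintro ⟨j, hj, m, hm, w, hlen, havoid, htree⟩
    refine ⟨w ++ [(j, m)], by simp [hlen], ?_, (inTree_append c w _).2 ⟨⟨trivial, hm⟩, htree⟩⟩
    simp only [List.mem_append, List.mem_singleton]
    rintro q (hq | rfl)
    exacts [havoid q hq, hj]

lemma avoidInf.hasAvoidingPath {c : Vtx k → Fin k → ℕ} {i : Fin k} (h : avoidInf c i [])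
    (n : ℕ) : HasAvoidingPath c i n := by
  obtain ⟨f, hf0, hf⟩ := h
  refine ⟨f n, ?_⟩
  induction n with
  | zero => exact hf0 ▸ ⟨rfl, by simp, trivial⟩
  | succ n ih =>
    obtain ⟨hlen, havoid, -⟩ := ih
    obtain ⟨htree, q, hq, hfq⟩ := hf n
    refine ⟨by simp [hfq, hlen], ?_, htree⟩
    rw [hfq]
    rintro q' (_ | ⟨_, hq'⟩)
    exacts [hq, havoid q' hq']

lemma friendSet_eq_singleton {c : Vtx k → Fin k → ℕ} (h : ∀ i, ¬ avoidInf c i []) :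
    friendSet c = {[]} := by
  ext v
  simp only [friendSet, Set.mem_ofPred_eq, Set.mem_singleton_iff]
  constructor
  · rintro ⟨-, hfriend⟩
    cases v with
    | nil => rfl
    | cons q w =>
      rcases hfriend q.1 with havoid | ⟨hroot, -⟩
      exacts [absurd rfl (havoid q List.mem_cons_self), absurd hroot (h q.1)]
  · rintro rfl
    exact ⟨trivial, fun i => Or.inl (by simp)⟩

end Paths

section Independence

variable {Ω ι T : Type*} [MeasurableSpace Ω]

lemma measure_biInter_eq_prod_of_iIndep {m : ι → MeasurableSpace Ω} {μ : Measure Ω}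
    [IsProbabilityMeasure μ] (h_le : ∀ i, m i ≤ ‹MeasurableSpace Ω›) (h_indep : iIndep m μ)
    (s : Finset T) {S : T → Set ι} (hS : (s : Set T).PairwiseDisjoint S) {A : T → Set Ω}
    (hA : ∀ t ∈ s, MeasurableSet[⨆ i ∈ S t, m i] (A t)) :
    μ (⋂ t ∈ s, A t) = ∏ t ∈ s, μ (A t) := by
  classical
  induction s using Finset.induction_on with
  | empty => simp
  | insert t s ht ih =>
    rw [Finset.set_biInter_insert, Finset.prod_insert ht]
    have hdisj : Disjoint (S t) (⋃ t' ∈ s, S t') := by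
      refine Set.disjoint_iUnion₂_right.2 fun t' ht' => hS (by simp) (by simp [ht']) ?_
      rintro rfl
      exact ht ht'
    have hrest : MeasurableSet[⨆ i ∈ ⋃ t' ∈ s, S t', m i] (⋂ t' ∈ s, A t') :=
      .biInter s.countable_toSet fun t' ht' =>
        (biSup_mono fun _ hi => Set.mem_biUnion ht' hi : (⨆ i ∈ S t', m i) ≤ _) _
          (hA t' (Finset.mem_insert_of_mem ht'))
    rw [(Indep_iff _ _ _).1 (indep_iSup_of_disjoint h_le h_indep hdisj) _ _
      (hA t (by simp)) hrest,
      ih (hS.subset (by simp)) fun t' ht' => hA t' (Finset.mem_insert_of_mem ht')]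

end Independence

lemma hasSum_poisson_mul_pow (l t : ℝ) :
    HasSum (fun m : ℕ => Real.exp (-l) * l ^ m / m.factorial * t ^ m)
      (Real.exp (-(l * (1 - t)))) := by
  have hterm : (fun m : ℕ => Real.exp (-l) * l ^ m / m.factorial * t ^ m) =
      fun m => Real.exp (-l) * ((l * t) ^ m / m.factorial) := by
    funext m
    rw [mul_pow]
    ring
  rw [hterm, show -(l * (1 - t)) = -l + l * t by ring, Real.exp_add, Real.exp_eq_exp_ℝ]
  exact (NormedSpace.expSeries_div_hasSum_exp (l * t)).mul_left _

section Indices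

variable {k : ℕ}

def subtreeIdx (u : Vtx k) : Set (Vtx k × Fin k) := {p | u <:+ p.1}

def colorIdx (u : Vtx k) (j : Fin k) : Set (Vtx k × Fin k) :=
  insert (u, j) (⋃ m, subtreeIdx ((j, m) :: u))

lemma disjoint_subtreeIdx_cons {u : Vtx k} {q q' : Fin k × ℕ} (h : q ≠ q') :
    Disjoint (subtreeIdx (q :: u)) (subtreeIdx (q' :: u)) := by
  refine Set.disjoint_left.2 fun p hp hp' => h ?_
  simpa using (List.suffix_of_suffix_length_le hp hp' (by simp)).eq_of_length (by simp)

lemma notMem_subtreeIdx_cons (u : Vtx k) (j : Fin k) (q : Fin k × ℕ) :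
    (u, j) ∉ subtreeIdx (q :: u) := fun h => by
  simpa using h.length_le

lemma disjoint_colorIdx {u : Vtx k} {j j' : Fin k} (h : j ≠ j') :
    Disjoint (colorIdx u j) (colorIdx u j') := by
  refine Set.disjoint_left.2 fun p hp hp' => ?_
  simp only [colorIdx, Set.mem_insert_iff, Set.mem_iUnion] at hp hp'
  rcases hp with rfl | ⟨m, hm⟩ <;> rcases hp' with hp' | ⟨m', hm'⟩
  · exact h (Prod.ext_iff.1 hp').2
  · exact notMem_subtreeIdx_cons u j _ hm'
  · exact notMem_subtreeIdx_cons u j' _ (hp' ▸ hm)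
  · exact Set.disjoint_left.1 (disjoint_subtreeIdx_cons (by simp [h])) hm hm'

end Indices

section OffspringEvents

variable {k : ℕ} {Ω : Type*} (X : Vtx k → Fin k → Ω → ℕ)

abbrev countSigma (p : Vtx k × Fin k) : MeasurableSpace Ω :=
  MeasurableSpace.comap (X p.1 p.2) inferInstance

lemma measurableSet_count_preimage {s : Set (Vtx k × Fin k)} {p : Vtx k × Fin k} (hp : p ∈ s)
    (t : Set ℕ) : MeasurableSet[⨆ p ∈ s, countSigma X p] (X p.1 p.2 ⁻¹' t) :=
  le_iSup₂ (f := fun p (_ : p ∈ s) => countSigma X p) p hp _ ⟨t, trivial, rfl⟩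

lemma measurableSet_inTree_subtree {u : Vtx k} {s : Set (Vtx k × Fin k)}
    (hs : subtreeIdx u ⊆ s) (v : Vtx k) :
    MeasurableSet[⨆ p ∈ s, countSigma X p] {ω | inTree (subtree (fun w j => X w j ω) u) v} := by
  induction v with
  | nil => exact MeasurableSet.univ
  | cons q w ih =>
    exact ih.inter (measurableSet_count_preimage X (p := (w ++ u, q.1))
      (hs (List.suffix_append w u)) {t | q.2 < t})

def avoidingPathEvent (i : Fin k) (n : ℕ) (u : Vtx k) : Set Ω :=
  {ω | HasAvoidingPath (subtree (fun v j => X v j ω) u) i n}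

def noChildPathOfColor (i j : Fin k) (n : ℕ) (u : Vtx k) : Set Ω :=
  {ω | ∀ m < X u j ω, ω ∉ avoidingPathEvent X i n ((j, m) :: u)}

lemma measurableSet_avoidingPathEvent {i : Fin k} {n : ℕ} {u : Vtx k}
    {s : Set (Vtx k × Fin k)} (hs : subtreeIdx u ⊆ s) :
    MeasurableSet[⨆ p ∈ s, countSigma X p] (avoidingPathEvent X i n u) := by
  have hunion : avoidingPathEvent X i n u = ⋃ v ∈ {v : Vtx k | v.length = n ∧ ∀ q ∈ v, q.1 ≠ i},
      {ω | inTree (subtree (fun w j => X w j ω) u) v} := by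
    ext ω
    simp [avoidingPathEvent, HasAvoidingPath, and_assoc]
  rw [hunion]
  exact .biUnion (Set.to_countable _) fun v _ => measurableSet_inTree_subtree X hs v

lemma compl_avoidingPathEvent_succ (i : Fin k) (n : ℕ) (u : Vtx k) :
    (avoidingPathEvent X i (n + 1) u)ᶜ =
      ⋂ j ∈ Finset.univ.erase i, noChildPathOfColor X i j n u := by
  ext ω
  simp [avoidingPathEvent, noChildPathOfColor, hasAvoidingPath_succ_iff, subtree_subtree, subtree]

lemma noChildPathOfColor_eq_iUnion (i j : Fin k) (n : ℕ) (u : Vtx k) :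
    noChildPathOfColor X i j n u = ⋃ m, X u j ⁻¹' {m} ∩
      ⋂ m' ∈ Finset.range m, (avoidingPathEvent X i n ((j, m') :: u))ᶜ := by
  ext ω
  simp only [noChildPathOfColor, Set.mem_ofPred_eq, Set.mem_iUnion, Set.mem_inter_iff,
    Set.mem_preimage, Set.mem_singleton_iff, Set.mem_iInter, Finset.mem_range, Set.mem_compl_iff]
  exact ⟨fun h => ⟨_, rfl, h⟩, fun ⟨_, hm, h⟩ => hm ▸ h⟩

lemma measurableSet_noChildPathOfColor (i j : Fin k) (n : ℕ) (u : Vtx k) :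
    MeasurableSet[⨆ p ∈ colorIdx u j, countSigma X p] (noChildPathOfColor X i j n u) := by
  rw [noChildPathOfColor_eq_iUnion]
  exact .iUnion fun m => (measurableSet_count_preimage X (Set.mem_insert _ _) _).inter
    (.biInter (Set.to_countable _) fun m' _ => (measurableSet_avoidingPathEvent X
      ((Set.subset_iUnion (fun m => subtreeIdx ((j, m) :: u)) m').trans
        (Set.subset_insert _ _))).compl)

end OffspringEvents

section Measures

variable {k : ℕ} {Ω : Type*} [MeasurableSpace Ω] {μ : Measure Ω} {lam : Fin k → ℝ}
  {X : Vtx k → Fin k → Ω → ℕ}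

lemma IsECBP.countSigma_le (hX : IsECBP μ lam X) (p : Vtx k × Fin k) :
    countSigma X p ≤ ‹MeasurableSpace Ω› :=
  (hX.meas p.1 p.2).comap_le

lemma IsECBP.iIndep_countSigma (hX : IsECBP μ lam X) : iIndep (countSigma X) μ :=
  hX.indep.iIndep

lemma IsECBP.measurableSet_of_countSigma (hX : IsECBP μ lam X) {s : Set (Vtx k × Fin k)}
    {A : Set Ω} (hA : MeasurableSet[⨆ p ∈ s, countSigma X p] A) : MeasurableSet A :=
  (iSup₂_le fun p _ => hX.countSigma_le p : (⨆ p ∈ s, countSigma X p) ≤ _) A hA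

lemma IsECBP.measure_count_inter_noChildPath (hX : IsECBP μ lam X) {i j : Fin k} {n : ℕ}
    {u : Vtx k} {b : ℝ} (hfail : ∀ u', μ (avoidingPathEvent X i n u')ᶜ = ENNReal.ofReal b)
    (m : ℕ) :
    μ (X u j ⁻¹' {m} ∩ ⋂ m' ∈ Finset.range m, (avoidingPathEvent X i n ((j, m') :: u))ᶜ) =
      ENNReal.ofReal (Real.exp (-lam j) * lam j ^ m / m.factorial) * ENNReal.ofReal b ^ m := by
  have := hX.isProb
  have hcount : MeasurableSet[⨆ p ∈ {(u, j)}, countSigma X p] (X u j ⁻¹' {m}) :=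
    measurableSet_count_preimage X (Set.mem_singleton _) _
  have hchildren : MeasurableSet[⨆ p ∈ ⋃ m', subtreeIdx ((j, m') :: u), countSigma X p]
      (⋂ m' ∈ Finset.range m, (avoidingPathEvent X i n ((j, m') :: u))ᶜ) :=
    .biInter (Set.to_countable _) fun m' _ =>
      (measurableSet_avoidingPathEvent X
        (Set.subset_iUnion (fun m' => subtreeIdx ((j, m') :: u)) m')).compl
  have hdisj : Disjoint {(u, j)} (⋃ m', subtreeIdx ((j, m') :: u)) := by
    simpa only [Set.disjoint_singleton_left, Set.mem_iUnion, not_exists] using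
      fun m' => notMem_subtreeIdx_cons u j (j, m')
  rw [(Indep_iff _ _ _).1 (indep_iSup_of_disjoint hX.countSigma_le hX.iIndep_countSigma hdisj)
      _ _ hcount hchildren,
    measure_biInter_eq_prod_of_iIndep hX.countSigma_le hX.iIndep_countSigma _
      (S := fun m' => subtreeIdx ((j, m') :: u))
      (fun m₁ _ m₂ _ h => disjoint_subtreeIdx_cons (by simpa using h))
      (fun m' _ => (measurableSet_avoidingPathEvent X subset_rfl).compl)]
  rw [Finset.prod_congr rfl fun m' _ => hfail _, Finset.prod_const, Finset.card_range,
    ← hX.poisson u j m]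
  rfl

lemma IsECBP.measure_noChildPathOfColor (hX : IsECBP μ lam X) {i j : Fin k} {n : ℕ}
    {u : Vtx k} {b : ℝ} (hj : 0 ≤ lam j) (hb : 0 ≤ b)
    (hfail : ∀ u', μ (avoidingPathEvent X i n u')ᶜ = ENNReal.ofReal b) :
    μ (noChildPathOfColor X i j n u) = ENNReal.ofReal (Real.exp (-(lam j * (1 - b)))) := by
  have hdisj : Pairwise (Function.onFun Disjoint fun m => X u j ⁻¹' {m} ∩
      ⋂ m' ∈ Finset.range m, (avoidingPathEvent X i n ((j, m') :: u))ᶜ) := fun m₁ m₂ h =>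
    ((Set.disjoint_singleton.2 h).preimage _).mono Set.inter_subset_left Set.inter_subset_left
  have hmeas : ∀ m, MeasurableSet (X u j ⁻¹' {m} ∩
      ⋂ m' ∈ Finset.range m, (avoidingPathEvent X i n ((j, m') :: u))ᶜ) := fun m =>
    (hX.meas u j (measurableSet_singleton m)).inter
      (.biInter (Set.to_countable _) fun _ _ =>
        (hX.measurableSet_of_countSigma (measurableSet_avoidingPathEvent X subset_rfl)).compl)
  have hpgf := hasSum_poisson_mul_pow (lam j) b
  rw [noChildPathOfColor_eq_iUnion, measure_iUnion hdisj hmeas,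
    tsum_congr (hX.measure_count_inter_noChildPath hfail)]
  have hterm : ∀ m : ℕ, ENNReal.ofReal (Real.exp (-lam j) * lam j ^ m / m.factorial) *
      ENNReal.ofReal b ^ m =
        ENNReal.ofReal (Real.exp (-lam j) * lam j ^ m / m.factorial * b ^ m) :=
    fun m => by rw [← ENNReal.ofReal_pow hb, ← ENNReal.ofReal_mul (by positivity)]
  rw [tsum_congr hterm, ← ENNReal.ofReal_tsum_of_nonneg (fun m => by positivity) hpgf.summable,
    hpgf.tsum_eq]

lemma IsECBP.measure_compl_avoidingPathEvent (hX : IsECBP μ lam X) (hlam : ∀ j, 0 ≤ lam j)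
    (i : Fin k) (n : ℕ) (u : Vtx k) :
    μ (avoidingPathEvent X i n u)ᶜ =
      ENNReal.ofReal (1 - (survivalMap (∑ j ∈ Finset.univ.erase i, lam j))^[n] 1) := by
  have := hX.isProb
  induction n generalizing u with
  | zero => simp [avoidingPathEvent, hasAvoidingPath_zero]
  | succ n ih =>
    have ha := (survivalMap_mapsTo_Icc (r := ∑ j ∈ Finset.univ.erase i, lam j)
      (Finset.sum_nonneg fun j _ => hlam j)).iterate n ⟨zero_le_one, le_rfl⟩
    rw [compl_avoidingPathEvent_succ,
      measure_biInter_eq_prod_of_iIndep hX.countSigma_le hX.iIndep_countSigma _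
        (S := colorIdx u) (fun j₁ _ j₂ _ h => disjoint_colorIdx h)
        (fun j _ => measurableSet_noChildPathOfColor X i j n u),
      Finset.prod_congr rfl fun j _ =>
        hX.measure_noChildPathOfColor (hlam j) (sub_nonneg.2 ha.2) ih,
      ← ENNReal.ofReal_prod_of_nonneg fun _ _ => (Real.exp_pos _).le, ← Real.exp_sum,
      Function.iterate_succ_apply', survivalMap]
    simp only [sub_sub_cancel, Finset.sum_neg_distrib, Finset.sum_mul]

lemma IsECBP.measure_avoidInf_eq_zero (hX : IsECBP μ lam X) (hlam : ∀ j, 0 ≤ lam j) {i : Fin k}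
    (hcrit : ∑ j ∈ Finset.univ.erase i, lam j ≤ 1) :
    μ {ω | avoidInf (fun v j => X v j ω) i []} = 0 := by
  have := hX.isProb
  set r := ∑ j ∈ Finset.univ.erase i, lam j
  have hr : 0 ≤ r := Finset.sum_nonneg fun j _ => hlam j
  have hpath : ∀ n, μ {ω | avoidInf (fun v j => X v j ω) i []} ≤
      ENNReal.ofReal ((survivalMap r)^[n] 1) := fun n => by
    have hx := (survivalMap_mapsTo_Icc hr).iterate n ⟨zero_le_one, le_rfl⟩
    calc _ ≤ μ (avoidingPathEvent X i n []) := measure_mono fun ω h => by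
          simpa [avoidingPathEvent, subtree_nil] using h.hasAvoidingPath n
      _ = ENNReal.ofReal ((survivalMap r)^[n] 1) := by
          rw [← compl_compl (avoidingPathEvent X i n []),
            prob_compl_eq_one_sub
              (hX.measurableSet_of_countSigma (measurableSet_avoidingPathEvent X subset_rfl)).compl,
            hX.measure_compl_avoidingPathEvent hlam, ← ENNReal.ofReal_one,
            ← ENNReal.ofReal_sub _ (sub_nonneg.2 hx.2), sub_sub_cancel]
  exact le_antisymm (ge_of_tendsto' (by
    simpa using ENNReal.tendsto_ofReal (tendsto_iterate_survivalMap hr hcrit)) hpath) bot_le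

end Measures

theorem fstar_of_fullyCriticalSubcritical_general
    {k : ℕ} (lam : Fin k → ℝ) (hpos : ∀ i, 0 < lam i)
    (hcrit : ∀ i : Fin k, ∑ j ∈ Finset.univ.erase i, lam j ≤ 1)
    {Ω' : Type*} [MeasurableSpace Ω'] (μ' : Measure Ω')
    (X : Vtx k → Fin k → Ω' → ℕ) (hX : IsECBP μ' lam X) :
    μ' {ω' : Ω' | (friendSet (fun v i => X v i ω')).Finite ∧
        (friendSet (fun v i => X v i ω')).ncard = 1} = 1 ∧
    ∀ ℓ : ℕ, 2 ≤ ℓ →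
      μ' {ω' : Ω' | (friendSet (fun v i => X v i ω')).Finite ∧
          (friendSet (fun v i => X v i ω')).ncard = ℓ} = 0 := by
  have := hX.isProb
  have hroot : ∀ᵐ ω ∂μ', ∀ i, ¬ avoidInf (fun v j => X v j ω) i [] :=
    ae_all_iff.2 fun i => measure_eq_zero_iff_ae_notMem.1
      (hX.measure_avoidInf_eq_zero (fun j => (hpos j).le) (hcrit i))
  have hsingleton : μ' {ω | ¬ friendSet (fun v i => X v i ω) = {[]}} = 0 :=
    ae_iff.1 (hroot.mono fun ω => friendSet_eq_singleton)
  refine ⟨(measure_congr (ae_eq_univ.2 (measure_mono_null ?_ hsingleton))).trans measure_univ,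
    fun ℓ hℓ => measure_mono_null ?_ hsingleton⟩
  · intro ω hω h
    exact hω (by simp [h])
  · intro ω hω h
    have hcard := hω.2
    rw [h, Set.ncard_singleton] at hcard
    omega

/-- Under Assumption (A), if `λ` is fully critical-subcritical
(`λ^{∖i} ≤ 1` for every color `i`), then `f*_1 = 1` and `f*_ℓ = 0` for every `ℓ ≥ 2`,
where `f*_ℓ` is the probability that the root of the edge-colored Poisson branching process
tree with color intensity vector `λ` has exactly `ℓ` friends. -/
theorem fstar_of_fullyCriticalSubcritical
    {k : ℕ} (hk : 2 ≤ k) (lam : Fin k → ℝ) (hpos : ∀ i, 0 < lam i)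
    (hA : ∀ I : Finset (Fin k), I.card ≤ k - 2 → ∑ i ∈ I, lam i < 1)
    (hcrit : ∀ i : Fin k, ∑ j ∈ Finset.univ.erase i, lam j ≤ 1)
    {Ω' : Type*} [MeasurableSpace Ω'] (μ' : Measure Ω')
    (X : Vtx k → Fin k → Ω' → ℕ) (hX : IsECBP μ' lam X) :
    μ' {ω' : Ω' | (friendSet (fun v i => X v i ω')).Finite ∧
        (friendSet (fun v i => X v i ω')).ncard = 1} = 1 ∧
    ∀ ℓ : ℕ, 2 ≤ ℓ →
      μ' {ω' : Ω' | (friendSet (fun v i => X v i ω')).Finite ∧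
          (friendSet (fun v i => X v i ω')).ncard = ℓ} = 0 :=
  fstar_of_fullyCriticalSubcritical_general lam hpos hcrit μ' X hX

end CAP
end

section
/- Let k ≥ 2 be an integer and λ̲ ∈ ℝ_+^k satisfy Assumption (A), and let G_∞(r) be an edge-colored Poisson branching process tree with color intensity vector λ̲. Then ρ(r), the number of vertices reachable from the root r by paths using at most k−2 distinct edge colors, is almost surely finite. -/
/-!
Fix a colour set `I` with `λ_I < 1`. The vertices whose path from the root uses only
colours of `I` form a Galton–Watson tree with Poisson(`λ_I`) offspring, whose `n`-th
generation has expected size `λ_I ^ n`. Its expected total size is therefore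
`(1 - λ_I)⁻¹ < ∞`, so it is a.s. finite by Borel–Cantelli. A vertex reachable from the root
through at most `k - 2` colours lies in one of these trees for one of the finitely many `I`
with `|I| ≤ k - 2`.
-/

open MeasureTheory ProbabilityTheory Filter

namespace CAP

open scoped ENNReal

section GeneralProbability

variable {Ω : Type*} [MeasurableSpace Ω] {μ : Measure Ω} {Y : Ω → ℕ}

lemma tsum_measure_lt_eq_tsum_mul_measure_eq (hY : Measurable Y) :
    ∑' m : ℕ, μ {ω | m < Y ω} = ∑' j : ℕ, (j : ℝ≥0∞) * μ {ω | Y ω = j} := by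
  have tail : ∀ m : ℕ,
      μ {ω | m < Y ω} = ∑' j : ℕ, if m < j then μ {ω | Y ω = j} else 0 := by
    intro m
    change μ (Y ⁻¹' Set.Ioi m) = _
    rw [← tsum_measure_preimage_singleton (Set.Ioi m).to_countable
      (fun j _ => hY (measurableSet_singleton j)), tsum_subtype _ fun j => μ (Y ⁻¹' {j})]
    simp only [Set.indicator_apply, Set.mem_Ioi]
    rfl
  have count : ∀ (j : ℕ) (c : ℝ≥0∞), ∑' m : ℕ, (if m < j then c else 0) = j * c := by
    intro j c
    rw [tsum_eq_sum (s := Finset.range j) (fun m hm => by simp_all),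
      Finset.sum_ite_of_true fun m hm => Finset.mem_range.mp hm]
    simp
  calc ∑' m : ℕ, μ {ω | m < Y ω}
      = ∑' (m : ℕ) (j : ℕ), if m < j then μ {ω | Y ω = j} else 0 := tsum_congr tail
    _ = ∑' (j : ℕ) (m : ℕ), if m < j then μ {ω | Y ω = j} else 0 := ENNReal.tsum_comm
    _ = ∑' j : ℕ, (j : ℝ≥0∞) * μ {ω | Y ω = j} := tsum_congr fun j => count j _

lemma tsum_measure_lt_eq_of_poisson [IsProbabilityMeasure μ] (hY : Measurable Y) {r : ℝ}
    (hr : 0 ≤ r)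
    (hpois : ∀ m : ℕ,
      μ {ω | Y ω = m} = ENNReal.ofReal (Real.exp (-r) * r ^ m / m.factorial)) :
    ∑' m : ℕ, μ {ω | m < Y ω} = ENNReal.ofReal r := by
  have total : ∑' j : ℕ, μ {ω | Y ω = j} = 1 := by
    rw [← tsum_univ]
    exact (tsum_measure_preimage_singleton Set.countable_univ
      fun j _ => hY (measurableSet_singleton j)).trans (by simp)
  have step : ∀ j : ℕ, ((j + 1 : ℕ) : ℝ≥0∞) * μ {ω | Y ω = j + 1}
      = ENNReal.ofReal r * μ {ω | Y ω = j} := by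
    intro j
    rw [hpois, hpois, ← ENNReal.ofReal_natCast, ← ENNReal.ofReal_mul (by positivity),
      ← ENNReal.ofReal_mul hr, Nat.factorial_succ]
    congr 1
    push_cast
    field_simp
    ring
  rw [tsum_measure_lt_eq_tsum_mul_measure_eq hY, tsum_eq_zero_add' ENNReal.summable]
  simp only [CharP.cast_eq_zero, zero_mul, zero_add]
  rw [tsum_congr step, ENNReal.tsum_mul_left, total, mul_one]

end GeneralProbability

section BranchingTree

variable {k : ℕ}

def pathKeys : Vtx k → Finset (Vtx k × Fin k)
  | [] => ∅
  | q :: v => insert (v, q.1) (pathKeys v)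

lemma length_lt_of_mem_pathKeys : ∀ {v : Vtx k} {p : Vtx k × Fin k},
    p ∈ pathKeys v → p.1.length < v.length
  | [], _, hp => by simp [pathKeys] at hp
  | _ :: _, _, hp => by
    rcases Finset.mem_insert.mp hp with rfl | h
    · simp
    · exact (length_lt_of_mem_pathKeys h).trans (by simp)

lemma inTree_congr {c c' : Vtx k → Fin k → ℕ} : ∀ {v : Vtx k},
    (∀ p ∈ pathKeys v, c p.1 p.2 = c' p.1 p.2) → (inTree c v ↔ inTree c' v)
  | [], _ => Iff.rfl
  | q :: v, h => by
    have hq : c v q.1 = c' v q.1 := h (v, q.1) (Finset.mem_insert_self _ _)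
    have hv := inTree_congr (v := v) fun p hp => h p (Finset.mem_insert_of_mem hp)
    exact and_congr hv (by rw [hq])

section RandomTree

variable {Ω : Type*} [MeasurableSpace Ω] {μ : Measure Ω} {lam : Fin k → ℝ}
  {X : Vtx k → Fin k → Ω → ℕ}

lemma measure_inTree_cons (hmeas : ∀ v i, Measurable (X v i))
    (hindep : iIndepFun (fun p : Vtx k × Fin k => X p.1 p.2) μ) (q : Fin k × ℕ) (v : Vtx k) :
    μ {ω | inTree (fun u i => X u i ω) (q :: v)} =
      μ {ω | inTree (fun u i => X u i ω) v} * μ {ω | q.2 < X v q.1 ω} := by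
  classical
  set S := pathKeys v
  -- `inTree v` only reads offspring counts of strict ancestors of `v`, independent of `X v q.1`.
  have hdisj : Disjoint S {(v, q.1)} :=
    Finset.disjoint_singleton_right.mpr fun h => (length_lt_of_mem_pathKeys h).false
  have hindepST := hindep.indepFun_finset S {(v, q.1)} hdisj fun p => hmeas p.1 p.2
  let A : Set (S → ℕ) :=
    {g | inTree (fun u i => if h : (u, i) ∈ S then g ⟨(u, i), h⟩ else 0) v}
  let B : Set (({(v, q.1)} : Finset (Vtx k × Fin k)) → ℕ) :=
    {g | q.2 < g ⟨(v, q.1), Finset.mem_singleton_self _⟩}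
  have hA : (fun ω (p : S) => X p.1.1 p.1.2 ω) ⁻¹' A = {ω | inTree (fun u i => X u i ω) v} :=
    Set.ext fun ω => inTree_congr fun p hp => by simp [S, hp]
  have key := hindepST.measure_inter_preimage_eq_mul A B A.to_countable.measurableSet
    B.to_countable.measurableSet
  rwa [hA] at key

variable (μ X) in
open scoped Classical in
noncomputable def generationWeight (I : Finset (Fin k)) (n : ℕ) (v : Vtx k) : ℝ≥0∞ :=
  if v.length = n ∧ ∀ q ∈ v, q.1 ∈ I then μ {ω | inTree (fun u i => X u i ω) v} else 0

lemma tsum_generationWeight_zero [IsProbabilityMeasure μ] (I : Finset (Fin k)) :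
    ∑' v : Vtx k, generationWeight μ X I 0 v = 1 := by
  rw [tsum_eq_single [] fun v hv => by simp [generationWeight, hv]]
  simp [generationWeight, inTree]

lemma generationWeight_cons (hmeas : ∀ v i, Measurable (X v i))
    (hindep : iIndepFun (fun p : Vtx k × Fin k => X p.1 p.2) μ) (I : Finset (Fin k)) (n : ℕ)
    (q : Fin k × ℕ) (u : Vtx k) :
    generationWeight μ X I (n + 1) (q :: u)
      = (if q.1 ∈ I then μ {ω | q.2 < X u q.1 ω} else 0) * generationWeight μ X I n u := by
  simp only [generationWeight, List.length_cons, Nat.add_right_cancel_iff,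
    List.forall_mem_cons, measure_inTree_cons hmeas hindep]
  by_cases hq : q.1 ∈ I
  · simp only [hq, true_and, if_true]
    split_ifs <;> simp [mul_comm]
  · simp [hq]

lemma tsum_generationWeight_succ (hX : IsECBP μ lam X) (hlam : ∀ i, 0 ≤ lam i)
    (I : Finset (Fin k)) (n : ℕ) :
    ∑' v : Vtx k, generationWeight μ X I (n + 1) v
      = (∑ i ∈ I, ENNReal.ofReal (lam i)) * ∑' v : Vtx k, generationWeight μ X I n v := by
  have := hX.isProb
  have hcons : Function.Injective fun p : Vtx k × (Fin k × ℕ) => p.2 :: p.1 :=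
    fun _ _ h => Prod.ext (List.cons.inj h).2 (List.cons.inj h).1
  have hsupp : Function.support (generationWeight μ X I (n + 1))
      ⊆ Set.range fun p : Vtx k × (Fin k × ℕ) => p.2 :: p.1 := by
    rintro (_ | ⟨q, u⟩) hv
    · exact absurd (by simp [generationWeight]) hv
    · exact ⟨(u, q), rfl⟩
  have children : ∀ (u : Vtx k) (i : Fin k),
      ∑' m : ℕ, generationWeight μ X I (n + 1) ((i, m) :: u)
        = (if i ∈ I then ENNReal.ofReal (lam i) else 0) * generationWeight μ X I n u := by
    intro u i
    simp only [generationWeight_cons hX.meas hX.indep, ENNReal.tsum_mul_right]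
    split_ifs
    · rw [tsum_measure_lt_eq_of_poisson (hX.meas u i) (hlam i) (hX.poisson u i)]
    · simp
  rw [← hcons.tsum_eq hsupp,
    ENNReal.tsum_prod (f := fun u q => generationWeight μ X I (n + 1) (q :: u)),
    ← ENNReal.tsum_mul_left]
  refine tsum_congr fun u => ?_
  rw [ENNReal.tsum_prod (f := fun i m => generationWeight μ X I (n + 1) ((i, m) :: u)),
    tsum_congr (children u), ENNReal.tsum_mul_right, tsum_fintype,
    Finset.sum_ite_mem, Finset.univ_inter]

lemma tsum_generationWeight (hX : IsECBP μ lam X) (hlam : ∀ i, 0 ≤ lam i)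
    (I : Finset (Fin k)) (n : ℕ) :
    ∑' v : Vtx k, generationWeight μ X I n v = (∑ i ∈ I, ENNReal.ofReal (lam i)) ^ n := by
  induction n with
  | zero =>
    have := hX.isProb
    rw [pow_zero, tsum_generationWeight_zero I]
  | succ n ih => rw [tsum_generationWeight_succ hX hlam, ih, pow_succ']

lemma tsum_measure_inTree_colors_mem (hX : IsECBP μ lam X) (hlam : ∀ i, 0 ≤ lam i)
    (I : Finset (Fin k)) :
    ∑' v : Vtx k, μ {ω | inTree (fun u i => X u i ω) v ∧ ∀ q ∈ v, q.1 ∈ I}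
      = (1 - ∑ i ∈ I, ENNReal.ofReal (lam i))⁻¹ := by
  classical
  have byGeneration : ∀ v : Vtx k,
      μ {ω | inTree (fun u i => X u i ω) v ∧ ∀ q ∈ v, q.1 ∈ I}
        = ∑' n : ℕ, generationWeight μ X I n v := by
    intro v
    rw [tsum_eq_single v.length fun n hn => by simp [generationWeight, Ne.symm hn]]
    by_cases hv : ∀ q ∈ v, q.1 ∈ I
    · simp only [generationWeight, eq_true hv, and_true, if_true]
    · simp only [generationWeight, hv, and_false, if_false, Set.ofPred_false, measure_empty]
  rw [tsum_congr byGeneration, ENNReal.tsum_comm,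
    tsum_congr (tsum_generationWeight hX hlam I), ENNReal.tsum_geometric]

lemma ae_finite_inTree_colors_mem (hX : IsECBP μ lam X) (hlam : ∀ i, 0 ≤ lam i)
    (I : Finset (Fin k)) (hI : ∑ i ∈ I, lam i < 1) :
    ∀ᵐ ω ∂μ,
      {v : Vtx k | inTree (fun u i => X u i ω) v ∧ ∀ q ∈ v, q.1 ∈ I}.Finite := by
  refine ae_finite_setOfPred_mem
    (s := fun v => {ω | inTree (fun u i => X u i ω) v ∧ ∀ q ∈ v, q.1 ∈ I}) ?_
  rw [tsum_measure_inTree_colors_mem hX hlam I, ENNReal.inv_ne_top,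
    ← ENNReal.ofReal_sum_of_nonneg fun i _ => hlam i]
  exact (tsub_pos_of_lt (ENNReal.ofReal_lt_one.mpr hI)).ne'

end RandomTree

end BranchingTree

theorem reachable_with_few_colors_ae_finite_general
    {k : ℕ} (lam : Fin k → ℝ) (hpos : ∀ i, 0 < lam i)
    (hA : ∀ I : Finset (Fin k), I.card ≤ k - 2 → ∑ i ∈ I, lam i < 1)
    {Ω' : Type*} [MeasurableSpace Ω'] (μ' : Measure Ω')
    (X : Vtx k → Fin k → Ω' → ℕ) (hX : IsECBP μ' lam X) :
    ∀ᵐ ω' ∂μ',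
      {v : Vtx k | inTree (fun u i => X u i ω') v ∧
        (v.map Prod.fst).toFinset.card ≤ k - 2}.Finite := by
  classical
  have few : ∀ᵐ ω' ∂μ', ∀ I : Finset (Fin k), I.card ≤ k - 2 →
      {v : Vtx k | inTree (fun u i => X u i ω') v ∧ ∀ q ∈ v, q.1 ∈ I}.Finite := by
    refine ae_all_iff.mpr fun I => ?_
    by_cases hI : I.card ≤ k - 2
    · filter_upwards [ae_finite_inTree_colors_mem hX (fun i => (hpos i).le) I (hA I hI)]
        with ω' h _ using h
    · exact Eventually.of_forall fun _ h => absurd h hI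
  filter_upwards [few] with ω' hfin
  refine ((Set.toFinite {I : Finset (Fin k) | I.card ≤ k - 2}).biUnion hfin).subset ?_
  rintro v ⟨hv, hcard⟩
  exact Set.mem_biUnion hcard
    ⟨hv, fun q hq => List.mem_toFinset.mpr (List.mem_map_of_mem hq)⟩

/-- Under Assumption (A), in the edge-colored Poisson branching process
tree the set of vertices reachable from the root by paths using at most `k − 2` distinct
edge colors is almost surely finite (i.e. `ρ(r) < ∞` a.s.). -/
theorem reachable_with_few_colors_ae_finite
    {k : ℕ} (hk : 2 ≤ k) (lam : Fin k → ℝ) (hpos : ∀ i, 0 < lam i)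
    (hA : ∀ I : Finset (Fin k), I.card ≤ k - 2 → ∑ i ∈ I, lam i < 1)
    {Ω' : Type*} [MeasurableSpace Ω'] (μ' : Measure Ω')
    (X : Vtx k → Fin k → Ω' → ℕ) (hX : IsECBP μ' lam X) :
    ∀ᵐ ω' ∂μ',
      {v : Vtx k | inTree (fun u i => X u i ω') v ∧
        (v.map Prod.fst).toFinset.card ≤ k - 2}.Finite :=
  reachable_with_few_colors_ae_finite_general lam hpos hA μ' X hX

end CAP
end

section
/- Let k ≥ 2 be an integer, n ∈ ℕ_+, d ∈ ℕ, h ∈ {0, 1, …, k−2}, λ̲ ∈ ℝ_+^k, G ~ 𝒢_n([n], λ̲) an edge-colored Erdős–Rényi multigraph, and v, w ∈ [n]. Then: (i) the conditional distribution of the edge-colored subgraph G'_d(v,w) given the explored graph G_d(v,w) is 𝒢_n([n] ∖ R^≤_{d−1}({v,w}, G), λ̲); and (ii) the conditional distribution of the edge-colored subgraph G̃'_h(v,w) given the sigma-algebra F_{v,w,h} is 𝒢_n([n] ∖ R̃^≤_h({v,w}, G), λ̲). -/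
open MeasureTheory ProbabilityTheory Filter

namespace CAP

/-- The uncolored graph of a colored edge configuration. -/
def ucGraph {k n : ℕ} (c : Fin k → Sym2 (Fin n) → Bool) : SimpleGraph (Fin n) where
  Adj x y := x ≠ y ∧ ∃ i : Fin k, c i s(x, y) = true
  symm := ⟨by
    rintro x y ⟨hxy, i, hc⟩
    exact ⟨hxy.symm, i, by rwa [Sym2.eq_swap] at hc⟩⟩
  loopless := ⟨fun x h => h.1 rfl⟩

/-- The graph using only edges whose color lies in `I`. -/
def colorGraph {k n : ℕ} (c : Fin k → Sym2 (Fin n) → Bool) (I : Finset (Fin k)) :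
    SimpleGraph (Fin n) where
  Adj x y := x ≠ y ∧ ∃ i ∈ I, c i s(x, y) = true
  symm := ⟨by
    rintro x y ⟨hxy, i, hi, hc⟩
    exact ⟨hxy.symm, i, hi, by rwa [Sym2.eq_swap] at hc⟩⟩
  loopless := ⟨fun x h => h.1 rfl⟩

/-- `R^≤_{d−1}(W)`: the set of vertices at (uncolored) graph distance `< d` from `W`. -/
def ballLT {k n : ℕ} (c : Fin k → Sym2 (Fin n) → Bool) (W : Set (Fin n)) (d : ℕ) :
    Set (Fin n) :=
  {u | ∃ w ∈ W, ∃ p : (ucGraph c).Walk w u, p.length < d}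

/-- `R̃^≤_h(W)`: the set of vertices reachable from `W` by a path using at most `h`
distinct edge colors. -/
def colorBall {k n : ℕ} (c : Fin k → Sym2 (Fin n) → Bool) (W : Set (Fin n)) (h : ℕ) :
    Set (Fin n) :=
  {u | ∃ w ∈ W, ∃ I : Finset (Fin k), I.card ≤ h ∧ (colorGraph c I).Reachable w u}

end CAP

/-! Both explored sets are stopping sets for the edge configuration: whether the exploration
returns `S` is decided by the edges meeting `S`. So the event "the exploration returns `S` and
the edges meeting `S` look like `η`" is either empty or the cylinder event fixing exactly those
edges, and conditioning an independent family on the values of some of its coordinates leaves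
the remaining coordinates independent with their original laws. -/

theorem SimpleGraph.Walk.exists_length_eq_of_adj_of_forall_mem {V : Type*}
    {G G' : SimpleGraph V} {S : Set V} {a : V} {d : ℕ}
    (hadj : ∀ x y, x ∈ S → G'.Adj x y → G.Adj x y)
    (hS : ∀ u (q : G.Walk a u), q.length < d → u ∈ S) {u : V} (p : G'.Walk a u)
    (hp : p.length < d) : ∃ q : G.Walk a u, q.length = p.length := by
  induction p using SimpleGraph.Walk.concatRec with
  | Hnil => exact ⟨.nil, rfl⟩
  | Hconcat p h ih =>
    rw [SimpleGraph.Walk.length_concat] at hp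
    obtain ⟨q, hq⟩ := ih hS (by omega)
    exact ⟨q.concat (hadj _ _ (hS _ q (by omega)) h), by simp [hq]⟩

theorem SimpleGraph.Reachable.of_adj_of_forall_mem {V : Type*} {G G' : SimpleGraph V}
    {S : Set V} {a u : V} (hadj : ∀ x y, x ∈ S → G'.Adj x y → G.Adj x y)
    (hS : ∀ u, G.Reachable a u → u ∈ S) (h : G'.Reachable a u) : G.Reachable a u :=
  let ⟨p⟩ := h
  let ⟨q, _⟩ := p.exists_length_eq_of_adj_of_forall_mem hadj
    (fun u q _ => hS u q.reachable) (Nat.lt_succ_self _)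
  q.reachable

namespace ProbabilityTheory

variable {Ω ι β : Type*} [MeasurableSpace Ω] [MeasurableSpace β] {μ : Measure Ω}
  {f : ι → Ω → β} {t : ι → Set β}

theorem iIndepFun.cond_iInter_preimage [Finite ι] (hf : ∀ i, Measurable (f i))
    (hindep : iIndepFun f μ) (ht : ∀ i, MeasurableSet (t i))
    (hM : μ (⋂ i, f i ⁻¹' t i) ≠ 0) : iIndepFun f μ[|⋂ i, f i ⁻¹' t i] :=
  hindep.comp (fun _ x => (x, x)) (fun _ => measurable_id.prodMk measurable_id) |>.cond hf
    (fun i => ne_bot_of_le_ne_bot hM (measure_mono (Set.iInter_subset _ i))) ht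

theorem iIndepFun.cond_iInter_preimage_apply [Finite ι] (hf : ∀ i, Measurable (f i))
    (hindep : iIndepFun f μ) (ht : ∀ i, MeasurableSet (t i))
    (hM : μ (⋂ i, f i ⁻¹' t i) ≠ 0) {i : ι} (hi : t i = Set.univ) {A : Set β}
    (hA : MeasurableSet A) : μ[f i ⁻¹' A | ⋂ j, f j ⁻¹' t j] = μ (f i ⁻¹' A) := by
  have := hindep.isProbabilityMeasure
  have h := cond_iInter (s := {i}) (f := fun _ => f i ⁻¹' A) hf
    (hindep.comp (fun _ x => (x, x)) (fun _ => measurable_id.prodMk measurable_id))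
    (by simpa using ⟨A, hA, rfl⟩)
    (fun j _ => ne_bot_of_le_ne_bot hM (measure_mono (Set.iInter_subset _ j))) ht
  simpa [hi] using h

end ProbabilityTheory

namespace CAP

section Exploration

variable {k n : ℕ}

def EqOnIncident (S : Set (Fin n)) (c c' : Fin k → Sym2 (Fin n) → Bool) : Prop :=
  ∀ i e, (∃ x ∈ e, x ∈ S) → c i e = c' i e

/-- The analogue of a stopping time: `B c` is determined by the edges of `c` incident to it. -/
def IsStoppingSet (B : (Fin k → Sym2 (Fin n) → Bool) → Set (Fin n)) : Prop :=
  ∀ c c', EqOnIncident (B c) c c' → B c' = B c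

theorem EqOnIncident.symm {S : Set (Fin n)} {c c' : Fin k → Sym2 (Fin n) → Bool}
    (h : EqOnIncident S c c') : EqOnIncident S c' c :=
  fun i e he => (h i e he).symm

theorem EqOnIncident.ucGraph_adj {S : Set (Fin n)} {c c' : Fin k → Sym2 (Fin n) → Bool}
    (h : EqOnIncident S c c') {x y : Fin n} (hx : x ∈ S) (hxy : (ucGraph c').Adj x y) :
    (ucGraph c).Adj x y :=
  let ⟨hne, i, hi⟩ := hxy
  ⟨hne, i, (h i _ ⟨x, Sym2.mem_mk_left x y, hx⟩).trans hi⟩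

theorem EqOnIncident.colorGraph_adj {S : Set (Fin n)} {c c' : Fin k → Sym2 (Fin n) → Bool}
    (h : EqOnIncident S c c') {I : Finset (Fin k)} {x y : Fin n} (hx : x ∈ S)
    (hxy : (colorGraph c' I).Adj x y) : (colorGraph c I).Adj x y :=
  let ⟨hne, i, hiI, hi⟩ := hxy
  ⟨hne, i, hiI, (h i _ ⟨x, Sym2.mem_mk_left x y, hx⟩).trans hi⟩

theorem isStoppingSet_ballLT (W : Set (Fin n)) (d : ℕ) :
    IsStoppingSet (k := k) (ballLT · W d) := by
  intro c c' h
  have hsub : ballLT c' W d ⊆ ballLT c W d := by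
    rintro u ⟨a, ha, p, hp⟩
    obtain ⟨q, hq⟩ := p.exists_length_eq_of_adj_of_forall_mem (fun _ _ => h.ucGraph_adj)
      (fun u q hq => ⟨a, ha, q, hq⟩) hp
    exact ⟨a, ha, q, hq ▸ hp⟩
  -- transferring `c`-walks to `c'` needs short `c'`-walks to stay in the ball: that is `hsub`
  refine hsub.antisymm ?_
  rintro u ⟨a, ha, p, hp⟩
  obtain ⟨q, hq⟩ := p.exists_length_eq_of_adj_of_forall_mem (fun _ _ => h.symm.ucGraph_adj)
    (fun u q hq => hsub ⟨a, ha, q, hq⟩) hp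
  exact ⟨a, ha, q, hq ▸ hp⟩

theorem isStoppingSet_colorBall (W : Set (Fin n)) (h : ℕ) :
    IsStoppingSet (k := k) (colorBall · W h) := by
  intro c c' hc
  have hsub : colorBall c' W h ⊆ colorBall c W h := by
    rintro u ⟨a, ha, I, hI, hr⟩
    exact ⟨a, ha, I, hI, hr.of_adj_of_forall_mem (fun _ _ => hc.colorGraph_adj)
      (fun u hu => ⟨a, ha, I, hI, hu⟩)⟩
  refine hsub.antisymm ?_
  rintro u ⟨a, ha, I, hI, hr⟩
  exact ⟨a, ha, I, hI, hr.of_adj_of_forall_mem (fun _ _ => hc.symm.colorGraph_adj)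
    (fun u hu => hsub ⟨a, ha, I, hI, hu⟩)⟩

theorem IsStoppingSet.eq_iff_of_eqOnIncident {B : (Fin k → Sym2 (Fin n) → Bool) → Set (Fin n)}
    (hB : IsStoppingSet B) {S : Set (Fin n)} {c η : Fin k → Sym2 (Fin n) → Bool}
    (hc : EqOnIncident S c η) : B c = S ↔ B η = S :=
  ⟨fun h => (hB c η (h ▸ hc)).trans h, fun h => (hB η c (h ▸ hc.symm)).trans h⟩

end Exploration

section Conditioning

variable {k n : ℕ} {Ω : Type*} [MeasurableSpace Ω] {μ : Measure Ω} {lam : Fin k → ℝ}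
  {E : Fin k → Sym2 (Fin n) → Ω → Bool}

theorem IsECER.cond_eqOnIncident (hE : IsECER μ n lam E) (S : Set (Fin n))
    (η : Fin k → Sym2 (Fin n) → Bool)
    (hM : μ {ω | EqOnIncident S (fun i e => E i e ω) η} ≠ 0) :
    iIndepFun (fun (q : {q : Fin k × Sym2 (Fin n) // ∀ x ∈ q.2, x ∉ S}) ω => E q.1.1 q.1.2 ω)
        μ[|{ω | EqOnIncident S (fun i e => E i e ω) η}] ∧
      ∀ (i : Fin k) (e : Sym2 (Fin n)), ¬ e.IsDiag → (∀ x ∈ e, x ∉ S) →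
        μ[{ω | E i e ω = true} | {ω | EqOnIncident S (fun i e => E i e ω) η}]
          = ENNReal.ofReal (1 - Real.exp (-(lam i) / n)) := by
  classical
  let t : Fin k × Sym2 (Fin n) → Set Bool := fun q =>
    if ∃ x ∈ q.2, x ∈ S then {η q.1 q.2} else Set.univ
  have hM_eq : {ω | EqOnIncident S (fun i e => E i e ω) η}
      = ⋂ q, (fun ω => E q.1 q.2 ω) ⁻¹' t q := by
    ext ω
    simp only [EqOnIncident, Set.mem_ofPred_eq, Set.mem_iInter, Set.mem_preimage, t,
      Prod.forall]
    refine forall₂_congr fun i e => ?_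
    split_ifs with he <;> simp [he]
  rw [hM_eq] at hM ⊢
  have hf : ∀ q : Fin k × Sym2 (Fin n), Measurable fun ω => E q.1 q.2 ω :=
    fun q => hE.meas q.1 q.2
  have ht : ∀ q, MeasurableSet (t q) := fun _ => .of_discrete
  refine ⟨(hE.indep.cond_iInter_preimage hf ht hM).precomp Subtype.val_injective, ?_⟩
  intro i e hdiag he
  have hte : t (i, e) = Set.univ := if_neg fun ⟨x, hx, hxS⟩ => he x hx hxS
  rw [← hE.prob i e hdiag]
  exact hE.indep.cond_iInter_preimage_apply hf ht hM hte (.singleton true)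

theorem IsECER.cond_isStoppingSet (hE : IsECER μ n lam E)
    {B : (Fin k → Sym2 (Fin n) → Bool) → Set (Fin n)} (hB : IsStoppingSet B)
    (S : Set (Fin n)) (η : Fin k → Sym2 (Fin n) → Bool)
    (hA : μ {ω | B (fun i e => E i e ω) = S ∧ EqOnIncident S (fun i e => E i e ω) η} ≠ 0) :
    iIndepFun (fun (q : {q : Fin k × Sym2 (Fin n) // ∀ x ∈ q.2, x ∉ S}) ω => E q.1.1 q.1.2 ω)
        μ[|{ω | B (fun i e => E i e ω) = S ∧ EqOnIncident S (fun i e => E i e ω) η}] ∧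
      ∀ (i : Fin k) (e : Sym2 (Fin n)), ¬ e.IsDiag → (∀ x ∈ e, x ∉ S) →
        μ[{ω | E i e ω = true} |
            {ω | B (fun i e => E i e ω) = S ∧ EqOnIncident S (fun i e => E i e ω) η}]
          = ENNReal.ofReal (1 - Real.exp (-(lam i) / n)) := by
  by_cases hBη : B η = S
  · have hA_eq : {ω | B (fun i e => E i e ω) = S ∧ EqOnIncident S (fun i e => E i e ω) η}
        = {ω | EqOnIncident S (fun i e => E i e ω) η} :=
      Set.ext fun ω => and_iff_right_of_imp fun hω => (hB.eq_iff_of_eqOnIncident hω).2 hBη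
    rw [hA_eq] at hA ⊢
    exact hE.cond_eqOnIncident S η hA
  · refine absurd ?_ hA
    refine measure_mono_null (fun ω hω => hBη ?_) measure_empty
    exact (hB.eq_iff_of_eqOnIncident hω.2).1 hω.1

end Conditioning

theorem unexplored_graph_is_ECER_general
    {k : ℕ} (lam : Fin k → ℝ)
    {Ω : Type*} [MeasurableSpace Ω] (μ : Measure Ω) (n : ℕ)
    (E : Fin k → Sym2 (Fin n) → Ω → Bool) (hE : IsECER μ n lam E)
    (v w : Fin n) (d : ℕ) (h : ℕ) :
    (∀ (S : Set (Fin n)) (η : Fin k → Sym2 (Fin n) → Bool),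
      (fun A : Set Ω =>
        μ A ≠ 0 →
          iIndepFun
            (fun (q : {q : Fin k × Sym2 (Fin n) // ∀ x ∈ q.2, x ∉ S}) ω => E q.1.1 q.1.2 ω) (ProbabilityTheory.cond μ A) ∧
          ∀ (i : Fin k) (e : Sym2 (Fin n)), ¬ e.IsDiag → (∀ x ∈ e, x ∉ S) →
            (ProbabilityTheory.cond μ A) {ω | E i e ω = true}
              = ENNReal.ofReal (1 - Real.exp (-(lam i) / n)))
      {ω | ballLT (fun i e => E i e ω) {v, w} d = S ∧
        ∀ (i : Fin k) (e : Sym2 (Fin n)), (∃ x ∈ e, x ∈ S) → E i e ω = η i e}) ∧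
    (∀ (S : Set (Fin n)) (η : Fin k → Sym2 (Fin n) → Bool),
      (fun A : Set Ω =>
        μ A ≠ 0 →
          iIndepFun
            (fun (q : {q : Fin k × Sym2 (Fin n) // ∀ x ∈ q.2, x ∉ S}) ω => E q.1.1 q.1.2 ω) (ProbabilityTheory.cond μ A) ∧
          ∀ (i : Fin k) (e : Sym2 (Fin n)), ¬ e.IsDiag → (∀ x ∈ e, x ∉ S) →
            (ProbabilityTheory.cond μ A) {ω | E i e ω = true}
              = ENNReal.ofReal (1 - Real.exp (-(lam i) / n)))
      {ω | colorBall (fun i e => E i e ω) {v, w} h = S ∧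
        ∀ (i : Fin k) (e : Sym2 (Fin n)), (∃ x ∈ e, x ∈ S) → E i e ω = η i e}) :=
  ⟨fun S η => hE.cond_isStoppingSet (isStoppingSet_ballLT {v, w} d) S η,
    fun S η => hE.cond_isStoppingSet (isStoppingSet_colorBall {v, w} h) S η⟩

/-- (The unexplored graph is ECER.) Let `G ~ 𝒢_n([n], λ)` and `v, w ∈ [n]`.
(i) Conditionally on the explored graph `G_d(v,w)` (that is, on the set
`S = R^≤_{d−1}({v,w})` together with the states of all colored edges meeting `S`), the colored
edges of `G'_d(v,w) = G − R^≤_{d−1}({v,w})` are distributed as `𝒢_n([n] ∖ S, λ̲)`: the edge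
indicators with both endpoints outside `S` are independent, an edge of color `i` being present
with probability `1 − exp(−λ_i/n)`.
(ii) The same holds conditionally on `F_{v,w,h}`, i.e. with `S = R̃^≤_h({v,w})` the
`≤ h`-color exploration, for the unexplored graph `G̃'_h(v,w)`. -/
theorem unexplored_graph_is_ECER
    {k : ℕ} (hk : 2 ≤ k) (lam : Fin k → ℝ) (hpos : ∀ i, 0 < lam i)
    {Ω : Type*} [MeasurableSpace Ω] (μ : Measure Ω) (n : ℕ) (hn : 1 ≤ n)
    (E : Fin k → Sym2 (Fin n) → Ω → Bool) (hE : IsECER μ n lam E)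
    (v w : Fin n) (d : ℕ) (h : ℕ) (hh : h ≤ k - 2) :
    (∀ (S : Set (Fin n)) (η : Fin k → Sym2 (Fin n) → Bool),
      (fun A : Set Ω =>
        μ A ≠ 0 →
          iIndepFun
            (fun (q : {q : Fin k × Sym2 (Fin n) // ∀ x ∈ q.2, x ∉ S}) ω => E q.1.1 q.1.2 ω) (ProbabilityTheory.cond μ A) ∧
          ∀ (i : Fin k) (e : Sym2 (Fin n)), ¬ e.IsDiag → (∀ x ∈ e, x ∉ S) →
            (ProbabilityTheory.cond μ A) {ω | E i e ω = true}
              = ENNReal.ofReal (1 - Real.exp (-(lam i) / n)))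
      {ω | ballLT (fun i e => E i e ω) {v, w} d = S ∧
        ∀ (i : Fin k) (e : Sym2 (Fin n)), (∃ x ∈ e, x ∈ S) → E i e ω = η i e}) ∧
    (∀ (S : Set (Fin n)) (η : Fin k → Sym2 (Fin n) → Bool),
      (fun A : Set Ω =>
        μ A ≠ 0 →
          iIndepFun
            (fun (q : {q : Fin k × Sym2 (Fin n) // ∀ x ∈ q.2, x ∉ S}) ω => E q.1.1 q.1.2 ω) (ProbabilityTheory.cond μ A) ∧
          ∀ (i : Fin k) (e : Sym2 (Fin n)), ¬ e.IsDiag → (∀ x ∈ e, x ∉ S) →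
            (ProbabilityTheory.cond μ A) {ω | E i e ω = true}
              = ENNReal.ofReal (1 - Real.exp (-(lam i) / n)))
      {ω | colorBall (fun i e => E i e ω) {v, w} h = S ∧
        ∀ (i : Fin k) (e : Sym2 (Fin n)), (∃ x ∈ e, x ∈ S) → E i e ω = η i e}) :=
  unexplored_graph_is_ECER_general lam μ n E hE v w d h

end CAP
end
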